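/- For all natural numbers n and m ≥ 2 and every real number a with a ≠ 0, β_{n+m−2}^{(n,m)}(a) = a^{n+2} (1−a)^{m−2} · ((1/2)_2 · (1/2)_{n+m−2}) / ((1/2)_n (1/2)_m) · ( C(n+m+1, 4) − C(n+m+1, 3)·C(n−1, 1)·a^{−1} + C(n+m+1, 2)·C(n, 2)·a^{−2} − C(n+m+1, 1)·C(n+1, 3)·a^{−3} + C(n+2, 4)·a^{−4} ), where C(n−1, 1) is the generalized binomial coefficient (equal to n−1, possibly negative) and all other C are usual binomial coefficients. -/

import Mathlib

open Finset

/-- The Bessel polynomial `q_n`, normalized so that `q_n(0) = 1`. -/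
noncomputable def besselQ (n : ℕ) (u : ℝ) : ℝ :=
  ∑ k ∈ Finset.range (n + 1),
    ((n.factorial : ℝ) * (2 * n - k).factorial * 2 ^ k) /
      ((2 * n).factorial * (n - k).factorial * k.factorial) * u ^ k

/-- The Pochhammer symbol `(x)_j = x (x+1) ⋯ (x+j-1)`. -/
noncomputable def poch (x : ℝ) (j : ℕ) : ℝ := ∏ i ∈ Finset.range j, (x + i)

/-- Generalized binomial coefficient with integer (possibly negative) upper entry. -/
noncomputable def gbinom (z : ℤ) (j : ℕ) : ℝ :=
  (∏ i ∈ Finset.range j, ((z : ℝ) - i)) / j.factorial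

/-! The `u^{k-j}`-coefficient of `q_k` is `c_k · (k+j)! / ((k-j)! j! 2^j)`, with `c_k = 1 / ((1/2)_k 2^k)`
the leading coefficient, so coefficients near the top degree of `q_n(a u) q_m((1-a) u)` and of
`∑ β_k q_k(u)` are low-order coefficients of the reflected polynomials. Comparing the coefficients
of `u^{n+m}`, `u^{n+m-1}`, `u^{n+m-2}` gives a triangular system for `β_{n+m}`, `β_{n+m-1}`,
`β_{n+m-2}`; back substitution and a rational-function identity in `a`, `n`, `m` give the formula. -/

open Polynomial Nat

namespace Polynomial

variable {R : Type*} [Semiring R]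

theorem coeff_reflect_comp_C_mul_X {p : R[X]} {n : ℕ} (hp : p.natDegree ≤ n) (a : R) (j : ℕ) :
    (reflect n (p.comp (C a * X))).coeff j = (reflect n p).coeff j * a ^ (n - j) := by
  rw [coeff_reflect, coeff_reflect, comp_C_mul_X_coeff]
  rcases le_or_gt j n with hj | hj
  · rw [revAt_le hj]
  · rw [revAt_eq_self_of_lt hj, coeff_eq_zero_of_natDegree_lt (hp.trans_lt hj), zero_mul,
      zero_mul]

theorem natDegree_comp_C_mul_X_le (p : R[X]) (a : R) :
    (p.comp (C a * X)).natDegree ≤ p.natDegree :=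
  natDegree_le_iff_coeff_eq_zero.2 fun k hk => by
    rw [comp_C_mul_X_coeff, coeff_eq_zero_of_natDegree_lt (by exact_mod_cast hk), zero_mul]

theorem coeff_mul_eq_sum_antidiagonal_reflect {p q : R[X]} {n m : ℕ} (hp : p.natDegree ≤ n)
    (hq : q.natDegree ≤ m) {i j : ℕ} (h : i + j = n + m) :
    (p * q).coeff i =
      ∑ x ∈ antidiagonal j, (reflect n p).coeff x.1 * (reflect m q).coeff x.2 := by
  rw [show i = revAt (n + m) j by rw [revAt_le (by omega)]; omega, ← coeff_reflect,
    reflect_mul p q hp hq, coeff_mul]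

theorem coeff_sum_C_mul_eq_sum_range_reflect {P : ℕ → R[X]} (hP : ∀ k, (P k).natDegree ≤ k)
    (β : ℕ → R) (i j : ℕ) :
    (∑ k ∈ range (i + j + 1), C (β k) * P k).coeff i =
      ∑ l ∈ range (j + 1), β (i + l) * (reflect (i + l) (P (i + l))).coeff l := by
  have hlow : ∀ k ∈ range i, β k * (P k).coeff i = 0 := fun k hk => by
    rw [coeff_eq_zero_of_natDegree_lt ((hP k).trans_lt (mem_range.1 hk)), mul_zero]
  rw [finsetSum_coeff, ← sum_range_add_sum_Ico _ (by omega : i ≤ i + j + 1),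
    sum_Ico_eq_sum_range, show i + j + 1 - i = j + 1 by omega]
  simp only [coeff_C_mul]
  rw [sum_eq_zero hlow, zero_add]
  refine sum_congr rfl fun l _ => ?_
  rw [coeff_reflect, revAt_le (by omega), Nat.add_sub_cancel]

theorem coeff_reflect_mul_pow_sub {K : Type*} [DivisionSemiring K] {p : K[X]} {n : ℕ} (hp : p.natDegree ≤ n)
    {a : K} (ha : a ≠ 0) (j : ℕ) :
    (reflect n p).coeff j * a ^ (n - j) = (reflect n p).coeff j * a ^ n / a ^ j := by
  rcases le_or_gt j n with hj | hj
  · rw [pow_sub₀ a ha hj, mul_div_assoc, div_eq_mul_inv]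
  · rw [coeff_reflect, revAt_eq_self_of_lt hj, coeff_eq_zero_of_natDegree_lt (hp.trans_lt hj)]
    simp

end Polynomial

noncomputable def besselCoeff (n k : ℕ) : ℝ :=
  ((n ! : ℝ) * (2 * n - k)! * 2 ^ k) / ((2 * n)! * (n - k)! * k !)

noncomputable def besselPoly (n : ℕ) : ℝ[X] :=
  ∑ k ∈ range (n + 1), C (besselCoeff n k) * X ^ k

theorem eval_besselPoly (n : ℕ) (u : ℝ) : (besselPoly n).eval u = besselQ n u := by
  simp [besselPoly, besselQ, besselCoeff, eval_finsetSum]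

theorem coeff_besselPoly (n k : ℕ) :
    (besselPoly n).coeff k = if k ≤ n then besselCoeff n k else 0 := by
  simp [besselPoly, finsetSum_coeff, coeff_X_pow]

theorem natDegree_besselPoly_le (n : ℕ) : (besselPoly n).natDegree ≤ n :=
  natDegree_le_iff_coeff_eq_zero.2 fun k hk => by
    rw [coeff_besselPoly, if_neg (by exact_mod_cast hk.not_ge)]

theorem besselCoeff_sub (k j : ℕ) (hj : j ≤ k) :
    besselCoeff k (k - j) =
      besselCoeff k k * ((k + j).descFactorial (2 * j) / (j ! * 2 ^ j)) := by
  obtain ⟨i, rfl⟩ := Nat.exists_eq_add_of_le' hj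
  have hdesc : ((i ! * (i + j + j).descFactorial (2 * j) : ℕ) : ℝ) = (i + j + j)! := by
    rw [← Nat.factorial_mul_descFactorial (by omega : 2 * j ≤ i + j + j),
      show i + j + j - 2 * j = i by omega]
  simp only [besselCoeff, show i + j - j = i by omega, show 2 * (i + j) - i = i + j + j by omega,
    show i + j - i = j by omega, Nat.sub_self, show 2 * (i + j) - (i + j) = i + j by omega]
  push_cast at hdesc
  rw [← hdesc, pow_add]
  field_simp
  ring

/-- No hypothesis `j ≤ k` is needed: for `j > k` both sides vanish, since `k + j < 2 * j`. -/
theorem coeff_reflect_besselPoly (k j : ℕ) :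
    (reflect k (besselPoly k)).coeff j =
      besselCoeff k k * ((k + j).descFactorial (2 * j) / (j ! * 2 ^ j)) := by
  rw [coeff_reflect, coeff_besselPoly]
  rcases le_or_gt j k with hj | hj
  · rw [revAt_le hj, if_pos (Nat.sub_le k j), besselCoeff_sub k j hj]
  · rw [revAt_eq_self_of_lt hj, if_neg hj.not_ge,
      Nat.descFactorial_eq_zero_iff_lt.2 (by omega)]
    simp

theorem poch_zero (x : ℝ) : poch x 0 = 1 :=
  prod_range_zero _

theorem poch_succ (x : ℝ) (j : ℕ) : poch x (j + 1) = poch x j * (x + j) :=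
  prod_range_succ _ _

theorem poch_half_mul_factorial (k : ℕ) : poch (1 / 2) k * 2 ^ k * (k ! * 2 ^ k) = (2 * k)! := by
  induction k with
  | zero => simp [poch]
  | succ k ih =>
    rw [poch_succ, show 2 * (k + 1) = 2 * k + 1 + 1 by ring, Nat.factorial_succ,
      Nat.factorial_succ, Nat.factorial_succ]
    push_cast
    rw [← ih]
    ring

theorem poch_half_pos (k : ℕ) : 0 < poch (1 / 2) k :=
  prod_pos fun _ _ => by positivity

theorem besselCoeff_self (k : ℕ) : besselCoeff k k = (poch (1 / 2) k * 2 ^ k)⁻¹ := by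
  rw [besselCoeff, Nat.sub_self, show 2 * k - k = k by omega, ← poch_half_mul_factorial,
    Nat.factorial_zero, Nat.cast_one]
  field_simp

theorem besselCoeff_self_ne_zero (k : ℕ) : besselCoeff k k ≠ 0 := by
  rw [besselCoeff_self]
  exact inv_ne_zero (mul_pos (poch_half_pos k) (by positivity)).ne'

theorem coeff_zero_reflect_besselPoly (k : ℕ) :
    (reflect k (besselPoly k)).coeff 0 = besselCoeff k k := by
  rw [coeff_reflect_besselPoly]
  simp

theorem coeff_one_reflect_besselPoly (k : ℕ) :
    (reflect k (besselPoly k)).coeff 1 = besselCoeff k k * ((k + 1) * k / 2) := by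
  rw [coeff_reflect_besselPoly, ← descPochhammer_eval_eq_descFactorial]
  simp [descPochhammer_succ_eval]

theorem coeff_two_reflect_besselPoly (k : ℕ) :
    (reflect k (besselPoly k)).coeff 2 =
      besselCoeff k k * ((k + 2) * (k + 1) * k * (k - 1) / 8) := by
  rw [coeff_reflect_besselPoly, ← descPochhammer_eval_eq_descFactorial]
  congr 1
  simp [descPochhammer_succ_eval]
  ring

theorem coeff_identity_of_linearization {n m : ℕ} {a b : ℝ} {β : ℕ → ℝ}
    (hβ : ∀ u : ℝ, besselQ n (a * u) * besselQ m (b * u) =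
      ∑ k ∈ range (n + m + 1), β k * besselQ k u) {i j : ℕ} (hij : i + j = n + m) :
    ∑ x ∈ antidiagonal j, (reflect n (besselPoly n)).coeff x.1 * a ^ (n - x.1) *
        ((reflect m (besselPoly m)).coeff x.2 * b ^ (m - x.2)) =
      ∑ l ∈ range (j + 1), β (i + l) * (reflect (i + l) (besselPoly (i + l))).coeff l := by
  have hpoly : (besselPoly n).comp (C a * X) * (besselPoly m).comp (C b * X) =
      ∑ k ∈ range (n + m + 1), C (β k) * besselPoly k :=
    Polynomial.funext fun u => by
      simp [eval_finsetSum, eval_besselPoly, hβ]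
  have hdeg (k : ℕ) (c : ℝ) : ((besselPoly k).comp (C c * X)).natDegree ≤ k :=
    (natDegree_comp_C_mul_X_le _ c).trans (natDegree_besselPoly_le k)
  have h := congrArg (fun p => p.coeff i) hpoly
  rw [← hij] at h
  rw [coeff_mul_eq_sum_antidiagonal_reflect (hdeg n a) (hdeg m b) hij,
    coeff_sum_C_mul_eq_sum_range_reflect natDegree_besselPoly_le β] at h
  simpa only [coeff_reflect_comp_C_mul_X (natDegree_besselPoly_le _)] using h

theorem bessel_linearization_third_coefficient
    (n m : ℕ) (hm : 2 ≤ m) (a : ℝ) (ha : a ≠ 0)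
    (β : ℕ → ℝ)
    (hβ : ∀ u : ℝ, besselQ n (a * u) * besselQ m ((1 - a) * u) =
      ∑ k ∈ Finset.range (n + m + 1), β k * besselQ k u) :
    β (n + m - 2) = a ^ (n + 2) * (1 - a) ^ (m - 2) *
      (poch (1/2) 2 * poch (1/2) (n + m - 2)) / (poch (1/2) n * poch (1/2) m) *
      (((n + m + 1).choose 4 : ℝ) -
        ((n + m + 1).choose 3 : ℝ) * gbinom ((n : ℤ) - 1) 1 * a ^ (-1 : ℤ) +
        ((n + m + 1).choose 2 : ℝ) * (n.choose 2 : ℝ) * a ^ (-2 : ℤ) -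
        ((n + m + 1).choose 1 : ℝ) * ((n + 1).choose 3 : ℝ) * a ^ (-3 : ℤ) +
        ((n + 2).choose 4 : ℝ) * a ^ (-4 : ℤ)) := by
  obtain ⟨m, rfl⟩ := Nat.exists_eq_add_of_le' hm
  have e0 := coeff_identity_of_linearization hβ (i := n + m + 2) (j := 0) (by ring)
  have e1 := coeff_identity_of_linearization hβ (i := n + m + 1) (j := 1) (by ring)
  have e2 := coeff_identity_of_linearization hβ (i := n + m) (j := 2) (by ring)
  simp only [Nat.sum_antidiagonal_succ, sum_range_succ, Nat.antidiagonal_zero, sum_singleton,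
    range_zero, sum_empty, zero_add, add_zero, Nat.reduceAdd, Nat.sub_zero, Nat.reduceSubDiff,
    coeff_reflect_mul_pow_sub (natDegree_besselPoly_le n) ha, coeff_zero_reflect_besselPoly,
    coeff_one_reflect_besselPoly, coeff_two_reflect_besselPoly] at e0 e1 e2
  have h0 := eq_div_of_mul_eq (besselCoeff_self_ne_zero _) e0.symm
  have h1 := eq_div_of_mul_eq (besselCoeff_self_ne_zero _) (eq_sub_of_add_eq e1.symm)
  have h2 := eq_div_of_mul_eq (besselCoeff_self_ne_zero _)
    (eq_sub_of_add_eq (eq_sub_of_add_eq e2.symm))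
  rw [show n + m + 1 + 1 = n + m + 2 by ring, h0] at h1
  rw [h0, h1] at h2
  rw [show n + (m + 2) - 2 = n + m by omega, Nat.add_sub_cancel, h2]
  simp only [besselCoeff_self, show n + m + 2 = n + m + 1 + 1 by ring, poch_succ, pow_succ,
    pow_zero, Nat.cast_choose_eq_descPochhammer_div, descPochhammer_succ_eval, descPochhammer_zero,
    eval_one, gbinom, prod_range_one, zpow_neg, poch_zero, Nat.factorial]
  have := poch_half_pos n
  have := poch_half_pos m
  have := poch_half_pos (n + m)
  push_cast
  field_simp
  ring
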